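/- arXiv:1401.1069 — 6 statements merged into one kernel-verified Lean document; each statement's English description precedes it below -/
import Mathlib

section
/- Let A be a real n×n matrix that is Hurwitz and let Q be a real symmetric positive definite n×n matrix. Then the matrix-valued function t ↦ exp(t·Aᵀ)·Q·exp(t·A) is integrable on [0, ∞), and the matrix P = ∫₀^∞ exp(t·Aᵀ)·Q·exp(t·A) dt is symmetric positive definite and satisfies the Lyapunov equation Aᵀ·P + P·A = -Q. -/
/-!
Over `ℂ` the characteristic polynomial of `A` splits as `∏ (X - μ)` with `Re μ < 0`, and by
Cayley–Hamilton `exp (t • A) * ∏ (A - μ) = 0`. The factors are removed one at a time: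
`G t = exp (t • A) * R` solves `G' = μ G + H` with `H t = exp (t • A) * ((A - μ) * R)`, and for
`Re μ < 0` variation of constants shows that `G` decays exponentially as soon as `H` does.
So `exp (t • A)` decays exponentially.

Hence `M t = exp (t • Aᵀ) * Q * exp (t • A) = exp (t • A)ᵀ * Q * exp (t • A)` is integrable on
`[0, ∞)`, and it is positive definite since `exp (t • A)` is invertible, so `P` is positive
definite. Finally `M' = Aᵀ * M + M * A` and `M t → 0`, so `Aᵀ * P + P * A = 0 - M 0 = -Q`.
-/

open Matrix MeasureTheory Filter Topology Set

def HasExpDecay {E : Type*} [Norm E] (f : ℝ → E) : Prop :=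
  ∃ C r : ℝ, 0 < r ∧ ∀ t, 0 ≤ t → ‖f t‖ ≤ C * Real.exp (-r * t)

namespace HasExpDecay

section NormedRing

variable {R : Type*} [NonUnitalSeminormedRing R] {f g : ℝ → R}

theorem mul (hf : HasExpDecay f) (hg : HasExpDecay g) : HasExpDecay (f * g) := by
  obtain ⟨C, r, hr, hfC⟩ := hf
  obtain ⟨D, s, hs, hgD⟩ := hg
  refine ⟨C * D, r + s, add_pos hr hs, fun t ht => ?_⟩
  calc ‖f t * g t‖ ≤ ‖f t‖ * ‖g t‖ := norm_mul_le _ _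
    _ ≤ C * Real.exp (-r * t) * (D * Real.exp (-s * t)) :=
      mul_le_mul (hfC t ht) (hgD t ht) (norm_nonneg _) ((norm_nonneg _).trans (hfC t ht))
    _ = C * D * Real.exp (-(r + s) * t) := by
      rw [neg_add, add_mul, Real.exp_add]; ring

theorem mul_const (hf : HasExpDecay f) (c : R) : HasExpDecay fun t => f t * c := by
  obtain ⟨C, r, hr, hfC⟩ := hf
  refine ⟨C * ‖c‖, r, hr, fun t ht => ?_⟩
  calc ‖f t * c‖ ≤ ‖f t‖ * ‖c‖ := norm_mul_le _ _
    _ ≤ C * Real.exp (-r * t) * ‖c‖ := by gcongr; exact hfC t ht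
    _ = C * ‖c‖ * Real.exp (-r * t) := by ring

end NormedRing

variable {E : Type*} [NormedAddCommGroup E] {f : ℝ → E}

theorem tendsto_zero (hf : HasExpDecay f) : Tendsto f atTop (𝓝 0) := by
  obtain ⟨C, r, hr, hfC⟩ := hf
  have hbound : Tendsto (fun t => C * Real.exp (-r * t)) atTop (𝓝 0) := by
    simpa using (Real.tendsto_exp_atBot.comp
      (tendsto_id.const_mul_atTop_of_neg (neg_neg_of_pos hr))).const_mul C
  exact squeeze_zero_norm' (eventually_ge_atTop 0 |>.mono hfC) hbound

theorem integrableOn_Ici (hf : HasExpDecay f) (hcont : Continuous f) :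
    IntegrableOn f (Ici 0) := by
  obtain ⟨C, r, hr, hfC⟩ := hf
  refine Integrable.mono' (g := fun t => C * Real.exp (-r * t)) ?_
    hcont.aestronglyMeasurable.restrict ?_
  · exact ((integrableOn_Ici_iff_integrableOn_Ioi).2 (exp_neg_integrableOn_Ioi 0 hr)).const_mul C
  · exact (ae_restrict_iff' measurableSet_Ici).2 (ae_of_all _ hfC)

end HasExpDecay

theorem norm_le_add_div_mul_exp_of_norm_deriv_le {E : Type*} [NormedAddCommGroup E]
    [NormedSpace ℝ E] {F F' : ℝ → E} {C β : ℝ} (hβ : 0 < β) (hC : 0 ≤ C)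
    (hF : ∀ s, HasDerivAt F (F' s) s)
    (hF' : ∀ s, 0 ≤ s → ‖F' s‖ ≤ C * Real.exp (β * s)) {t : ℝ} (ht : 0 ≤ t) :
    ‖F t‖ ≤ ‖F 0‖ + C / β * Real.exp (β * t) := by
  refine image_norm_le_of_norm_deriv_right_le_deriv_boundary (a := 0) (b := t)
    (B := fun s => ‖F 0‖ + C / β * Real.exp (β * s))
    (fun s _ => (hF s).continuousAt.continuousWithinAt) (fun s _ => (hF s).hasDerivWithinAt)
    ?_ (B' := fun s => C * Real.exp (β * s)) (fun s => ?_) (fun s hs => hF' s hs.1) ⟨ht, le_rfl⟩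
  · have : 0 ≤ C / β * Real.exp (β * 0) := by positivity
    simpa using this
  · refine ((((hasDerivAt_id s).const_mul β).exp.const_mul (C / β)).const_add
      ‖F 0‖).congr_deriv ?_
    change C / β * (Real.exp (β * s) * (β * 1)) = C * Real.exp (β * s)
    field_simp

section ComplexNormedSpace

variable {E : Type*} [NormedAddCommGroup E] [NormedSpace ℂ E]

theorem hasDerivAt_cexp_neg_mul_smul {G : ℝ → E} {μ : ℂ} {H : E} {t : ℝ}
    (hG : HasDerivAt G (μ • G t + H) t) :
    HasDerivAt (fun s : ℝ => Complex.exp (-(μ * s)) • G s) (Complex.exp (-(μ * t)) • H) t := by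
  have hc : HasDerivAt (fun s : ℝ => Complex.exp (-(μ * s))) (Complex.exp (-(μ * t)) * -μ) t := by
    simpa using ((((hasDerivAt_id (t : ℂ)).const_mul μ).neg.cexp).comp_ofReal (z := t))
  refine (hc.smul hG).congr_deriv ?_
  rw [smul_add, mul_smul, neg_smul, smul_neg]
  abel

theorem HasExpDecay.of_hasDerivAt_smul_add {G H : ℝ → E} {μ : ℂ} (hμ : μ.re < 0)
    (hG : ∀ t, HasDerivAt G (μ • G t + H t) t) (hH : HasExpDecay H) : HasExpDecay G := by
  obtain ⟨C, r, hr, hHC⟩ := hH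
  set ν := μ.re
  set κ := min r (-ν / 2)
  set β := -ν - κ
  have hκ : 0 < κ := lt_min hr (by linarith)
  have hβ : 0 < β := by linarith [min_le_right r (-ν / 2)]
  have hC : 0 ≤ C := by simpa using (norm_nonneg _).trans (hHC 0 le_rfl)
  -- `F = e^{-μt} • G` has `F' = e^{-μt} • H`, of norm `≤ C e^{(-ν-r)t} ≤ C e^{βt}`; any rate
  -- `0 < κ ≤ r` with `β = -ν - κ > 0` would do.
  set F : ℝ → E := fun s => Complex.exp (-(μ * s)) • G s
  have hF' : ∀ s : ℝ, 0 ≤ s → ‖Complex.exp (-(μ * s)) • H s‖ ≤ C * Real.exp (β * s) := by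
    intro s hs
    rw [norm_smul, Complex.norm_exp]
    calc Real.exp (-(μ * s)).re * ‖H s‖ ≤ Real.exp (-ν * s) * (C * Real.exp (-r * s)) := by
          gcongr
          · simp [ν]
          · exact hHC s hs
      _ = C * Real.exp ((-ν - r) * s) := by rw [sub_mul, sub_eq_add_neg, Real.exp_add]; ring_nf
      _ ≤ C * Real.exp (β * s) := by gcongr; linarith [min_le_left r (-ν / 2)]
  refine ⟨‖G 0‖ + C / β, κ, hκ, fun t ht => ?_⟩
  have hFt := norm_le_add_div_mul_exp_of_norm_deriv_le hβ hC
    (fun s => hasDerivAt_cexp_neg_mul_smul (hG s)) hF' ht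
  have hGF : ‖G t‖ = Real.exp (ν * t) * ‖F t‖ := by
    simp [F, norm_smul, Complex.norm_exp, ν, ← mul_assoc, ← Real.exp_add]
  calc ‖G t‖ = Real.exp (ν * t) * ‖F t‖ := hGF
    _ ≤ Real.exp (ν * t) * (‖G 0‖ + C / β * Real.exp (β * t)) := by gcongr; simpa [F] using hFt
    _ = ‖G 0‖ * Real.exp (ν * t) + C / β * Real.exp (-κ * t) := by
        rw [mul_add, ← mul_assoc, mul_comm _ (C / β), mul_assoc, ← Real.exp_add,
          show ν * t + β * t = -κ * t by simp only [β]; ring]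
        ring
    _ ≤ (‖G 0‖ + C / β) * Real.exp (-κ * t) := by
        have := Real.exp_le_exp.2 (show ν * t ≤ -κ * t by nlinarith [min_le_right r (-ν / 2)])
        nlinarith [norm_nonneg (G 0)]

end ComplexNormedSpace

section ComplexBanachAlgebra

open Polynomial

variable {𝔸 : Type*} [NormedRing 𝔸] [NormedAlgebra ℂ 𝔸] [CompleteSpace 𝔸]

theorem hasExpDecay_exp_smul_mul_of_sub_algebraMap {B R : 𝔸} {μ : ℂ} (hμ : μ.re < 0)
    (h : HasExpDecay fun t : ℝ =>
      NormedSpace.exp ((t : ℂ) • B) * ((B - algebraMap ℂ 𝔸 μ) * R)) :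
    HasExpDecay fun t : ℝ => NormedSpace.exp ((t : ℂ) • B) * R := by
  refine HasExpDecay.of_hasDerivAt_smul_add hμ (fun t => ?_) h
  refine (((hasDerivAt_exp_smul_const B (t : ℂ)).scomp t
    Complex.ofRealCLM.hasDerivAt).mul_const R).congr_deriv ?_
  simp [mul_sub, sub_mul, mul_assoc, Algebra.algebraMap_eq_smul_one]

theorem hasExpDecay_exp_smul_mul_of_aeval_prod {B R : 𝔸} (s : Multiset ℂ)
    (hs : ∀ μ ∈ s, μ.re < 0)
    (h : HasExpDecay fun t : ℝ =>
      NormedSpace.exp ((t : ℂ) • B) * (aeval B (s.map fun μ => X - C μ).prod * R)) :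
    HasExpDecay fun t : ℝ => NormedSpace.exp ((t : ℂ) • B) * R := by
  induction s using Multiset.induction_on with
  | empty => simpa using h
  | cons μ s ih =>
    refine ih (fun ν hν => hs ν (Multiset.mem_cons_of_mem hν)) <|
      hasExpDecay_exp_smul_mul_of_sub_algebraMap (hs μ (Multiset.mem_cons_self μ s)) ?_
    simpa [mul_assoc] using h

theorem hasExpDecay_exp_smul_of_aeval_eq_zero {B : 𝔸} {p : ℂ[X]} (hp : p.Monic)
    (hroots : ∀ μ ∈ p.roots, μ.re < 0) (hB : aeval B p = 0) :
    HasExpDecay fun t : ℝ => NormedSpace.exp ((t : ℂ) • B) := by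
  have hzero : HasExpDecay fun t : ℝ =>
      NormedSpace.exp ((t : ℂ) • B) * (aeval B (p.roots.map fun μ => X - C μ).prod * 1) := by
    rw [← (IsAlgClosed.splits p).eq_prod_roots_of_monic hp, hB]
    exact ⟨0, 1, one_pos, fun t _ => by simp⟩
  simpa using hasExpDecay_exp_smul_mul_of_aeval_prod p.roots hroots hzero

end ComplexBanachAlgebra

theorem hasDerivAt_exp_smul_mul_mul_exp_smul {𝔸 : Type*} [NormedRing 𝔸] [NormedAlgebra ℝ 𝔸]
    [CompleteSpace 𝔸] (X Y Q : 𝔸) (t : ℝ) :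
    HasDerivAt (fun t : ℝ => NormedSpace.exp (t • X) * Q * NormedSpace.exp (t • Y))
      (X * (NormedSpace.exp (t • X) * Q * NormedSpace.exp (t • Y)) +
        NormedSpace.exp (t • X) * Q * NormedSpace.exp (t • Y) * Y) t := by
  refine (((hasDerivAt_exp_smul_const' X t).mul_const Q).mul
    (hasDerivAt_exp_smul_const Y t)).congr_deriv ?_
  simp only [mul_assoc]

theorem MeasureTheory.integral_pos_of_forall_pos {α : Type*} [MeasurableSpace α]
    {μ : Measure α} [NeZero μ] {f : α → ℝ} (hf : Integrable f μ) (hpos : ∀ a, 0 < f a) :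
    0 < ∫ a, f a ∂μ := by
  rw [integral_pos_iff_support_of_nonneg (fun a => (hpos a).le) hf,
    Function.support_eq_univ fun a => (hpos a).ne']
  exact Measure.measure_univ_pos.2 (NeZero.ne μ)

namespace Matrix

theorem spectrum_transpose {ι K : Type*} [Fintype ι] [DecidableEq ι] [Field K]
    (B : Matrix ι ι K) : spectrum K Bᵀ = spectrum K B := by
  ext μ
  simp only [mem_spectrum_iff_isRoot_charpoly, charpoly_transpose]

section EntrywiseIntegral

theorem linearMap_apply_eq_sum {m n R : Type*} [Fintype m] [Fintype n] [DecidableEq m]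
    [DecidableEq n] [Semiring R] (L : Matrix m n R →ₗ[R] R) (N : Matrix m n R) :
    L N = ∑ i, ∑ j, N i j * L (single i j 1) := by
  conv_lhs => rw [matrix_eq_sum_single N]
  simp only [map_sum]
  refine Finset.sum_congr rfl fun i _ => Finset.sum_congr rfl fun j _ => ?_
  rw [← smul_eq_mul, ← map_smul, smul_single, smul_eq_mul, mul_one]

variable {m n α 𝕜 : Type*} [Fintype m] [Fintype n] [RCLike 𝕜] [MeasurableSpace α]
  {μ : Measure α} {M : α → Matrix m n 𝕜} (hM : ∀ i j, Integrable (fun a => M a i j) μ)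
  (L : Matrix m n 𝕜 →ₗ[𝕜] 𝕜)
include hM

theorem integrable_linearMap_comp : Integrable (fun a => L (M a)) μ := by
  classical
  rw [funext fun a => linearMap_apply_eq_sum L (M a)]
  exact integrable_finsetSum _ fun i _ => integrable_finsetSum _ fun j _ => (hM i j).mul_const _

theorem integral_linearMap_comp :
    ∫ a, L (M a) ∂μ = L (of fun i j => ∫ a, M a i j ∂μ) := by
  classical
  rw [funext fun a => linearMap_apply_eq_sum L (M a), linearMap_apply_eq_sum L]
  simp only [of_apply]
  rw [integral_finsetSum _ fun i _ => integrable_finsetSum _ fun j _ => (hM i j).mul_const _]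
  refine Finset.sum_congr rfl fun i _ => ?_
  rw [integral_finsetSum _ fun j _ => (hM i j).mul_const _]
  exact Finset.sum_congr rfl fun j _ => integral_mul_const _ _

end EntrywiseIntegral

variable {ι : Type*} [Fintype ι] [DecidableEq ι]

noncomputable def lyapunovIntegrand (A Q : Matrix ι ι ℝ) (t : ℝ) : Matrix ι ι ℝ :=
  NormedSpace.exp (t • Aᵀ) * Q * NormedSpace.exp (t • A)

noncomputable def lyapunovIntegral (A Q : Matrix ι ι ℝ) : Matrix ι ι ℝ :=
  of fun i j => ∫ t in Ici (0 : ℝ), lyapunovIntegrand A Q t i j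

theorem posDef_lyapunovIntegrand (A : Matrix ι ι ℝ) {Q : Matrix ι ι ℝ} (hQ : Q.PosDef)
    (t : ℝ) : (lyapunovIntegrand A Q t).PosDef := by
  rw [lyapunovIntegrand, ← transpose_smul, exp_transpose,
    ← conjTranspose_eq_transpose_of_trivial]
  exact hQ.conjTranspose_mul_mul_same (mulVec_injective_iff_isUnit.2 (isUnit_exp _))

section LinftyOpNorm

attribute [local instance] Matrix.linftyOpNormedAddCommGroup Matrix.linftyOpNormedSpace
  Matrix.linftyOpNormedRing Matrix.linftyOpNormedAlgebra

theorem norm_apply_le_linfty_opNorm {m n α : Type*} [Fintype m] [Fintype n]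
    [NormedAddCommGroup α] (N : Matrix m n α) (i : m) (j : n) : ‖N i j‖ ≤ ‖N‖ := by
  rw [← coe_nnnorm, ← coe_nnnorm, NNReal.coe_le_coe, linfty_opNNNorm_def]
  calc ‖N i j‖₊ ≤ ∑ j', ‖N i j'‖₊ :=
        Finset.single_le_sum (f := fun j' => ‖N i j'‖₊) (fun _ _ => zero_le) (Finset.mem_univ j)
    _ ≤ _ := Finset.le_sup (f := fun i => ∑ j', ‖N i j'‖₊) (Finset.mem_univ i)

theorem linfty_opNorm_map_ofReal {m n : Type*} [Fintype m] [Fintype n] (N : Matrix m n ℝ) :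
    ‖N.map ((↑) : ℝ → ℂ)‖ = ‖N‖ := by
  simp [linfty_opNorm_def]

theorem map_ofReal_exp_smul (A : Matrix ι ι ℝ) (t : ℝ) :
    (NormedSpace.exp (t • A)).map ((↑) : ℝ → ℂ) =
      NormedSpace.exp ((t : ℂ) • A.map ((↑) : ℝ → ℂ)) := by
  have hcont : Continuous ((algebraMap ℝ ℂ).mapMatrix : Matrix ι ι ℝ →+* Matrix ι ι ℂ) :=
    continuous_id.matrix_map Complex.continuous_ofReal
  have h := NormedSpace.map_exp _ hcont (t • A)
  rw [show (algebraMap ℝ ℂ).mapMatrix (t • A) = (t : ℂ) • A.map ((↑) : ℝ → ℂ) by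
    ext i j; simp] at h
  exact h

theorem hasExpDecay_exp_smul_of_spectrum {B : Matrix ι ι ℂ}
    (hB : ∀ μ ∈ spectrum ℂ B, μ.re < 0) :
    HasExpDecay fun t : ℝ => NormedSpace.exp ((t : ℂ) • B) :=
  hasExpDecay_exp_smul_of_aeval_eq_zero B.charpoly_monic
    (fun μ hμ => hB μ (mem_spectrum_of_isRoot_charpoly (Polynomial.isRoot_of_mem_roots hμ)))
    B.aeval_self_charpoly

theorem hasExpDecay_exp_smul {A : Matrix ι ι ℝ}
    (hA : ∀ μ ∈ spectrum ℂ (A.map ((↑) : ℝ → ℂ)), μ.re < 0) :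
    HasExpDecay fun t : ℝ => NormedSpace.exp (t • A) := by
  obtain ⟨C, r, hr, h⟩ := hasExpDecay_exp_smul_of_spectrum hA
  exact ⟨C, r, hr, fun t ht => by
    simpa [← linfty_opNorm_map_ofReal, map_ofReal_exp_smul] using h t ht⟩

theorem hasDerivAt_lyapunovIntegrand_apply (A Q : Matrix ι ι ℝ) (i j : ι) (t : ℝ) :
    HasDerivAt (fun t => lyapunovIntegrand A Q t i j)
      ((Aᵀ * lyapunovIntegrand A Q t + lyapunovIntegrand A Q t * A) i j) t :=
  (LinearMap.toContinuousLinearMap (entryLinearMap ℝ ℝ i j)).hasFDerivAt.comp_hasDerivAt t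
    (hasDerivAt_exp_smul_mul_mul_exp_smul Aᵀ A Q t)

theorem hasExpDecay_lyapunovIntegrand_apply {A : Matrix ι ι ℝ}
    (hA : ∀ μ ∈ spectrum ℂ (A.map ((↑) : ℝ → ℂ)), μ.re < 0) (Q : Matrix ι ι ℝ) (i j : ι) :
    HasExpDecay fun t => lyapunovIntegrand A Q t i j := by
  obtain ⟨C, r, hr, h⟩ :=
    ((hasExpDecay_exp_smul (by rwa [transpose_map, spectrum_transpose])).mul_const Q).mul
      (hasExpDecay_exp_smul hA)
  exact ⟨C, r, hr, fun t ht => (norm_apply_le_linfty_opNorm _ i j).trans (h t ht)⟩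

end LinftyOpNorm

variable {A : Matrix ι ι ℝ} (hA : ∀ μ ∈ spectrum ℂ (A.map ((↑) : ℝ → ℂ)), μ.re < 0)
include hA

theorem integrableOn_lyapunovIntegrand_apply (Q : Matrix ι ι ℝ) (i j : ι) :
    IntegrableOn (fun t => lyapunovIntegrand A Q t i j) (Ici 0) :=
  (hasExpDecay_lyapunovIntegrand_apply hA Q i j).integrableOn_Ici <|
    continuous_iff_continuousAt.2 fun t =>
      (hasDerivAt_lyapunovIntegrand_apply A Q i j t).continuousAt

theorem posDef_lyapunovIntegral {Q : Matrix ι ι ℝ} (hQ : Q.PosDef) :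
    (lyapunovIntegral A Q).PosDef := by
  have hM := posDef_lyapunovIntegrand A hQ
  refine .of_dotProduct_mulVec_pos ?_ fun x hx => ?_
  · ext i j
    simp only [conjTranspose_apply, star_trivial, lyapunovIntegral, of_apply]
    exact integral_congr_ae (ae_of_all _ fun t => (hM t).isHermitian.apply i j)
  · let q : Matrix ι ι ℝ →ₗ[ℝ] ℝ :=
      { toFun := fun N => x ⬝ᵥ N *ᵥ x
        map_add' := fun N N' => by simp [add_mulVec, dotProduct_add]
        map_smul' := fun c N => by simp [smul_mulVec, dotProduct_smul] }
    have hint := integrableOn_lyapunovIntegrand_apply hA Q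
    have : NeZero (volume.restrict (Ici (0 : ℝ))) := ⟨by simp⟩
    rw [star_trivial]
    change 0 < q (lyapunovIntegral A Q)
    rw [lyapunovIntegral, ← integral_linearMap_comp hint q]
    exact integral_pos_of_forall_pos (integrable_linearMap_comp hint q)
      fun t => by simpa [q] using (hM t).dotProduct_mulVec_pos hx

theorem transpose_mul_lyapunovIntegral_add_lyapunovIntegral_mul (Q : Matrix ι ι ℝ) :
    Aᵀ * lyapunovIntegral A Q + lyapunovIntegral A Q * A = -Q := by
  ext i j
  let L : Matrix ι ι ℝ →ₗ[ℝ] ℝ :=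
    entryLinearMap ℝ ℝ i j ∘ₗ (LinearMap.mulLeft ℝ Aᵀ + LinearMap.mulRight ℝ A)
  have hint := integrableOn_lyapunovIntegrand_apply hA Q
  calc (Aᵀ * lyapunovIntegral A Q + lyapunovIntegral A Q * A) i j
      = ∫ t in Ici (0 : ℝ), L (lyapunovIntegrand A Q t) :=
        (integral_linearMap_comp hint L).symm
    _ = 0 - lyapunovIntegrand A Q 0 i j := by
        rw [integral_Ici_eq_integral_Ioi]
        exact integral_Ioi_of_hasDerivAt_of_tendsto'
          (fun t _ => hasDerivAt_lyapunovIntegrand_apply A Q i j t)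
          (IntegrableOn.mono_set (integrable_linearMap_comp hint L) Ioi_subset_Ici_self)
          (hasExpDecay_lyapunovIntegrand_apply hA Q i j).tendsto_zero
    _ = (-Q) i j := by simp [lyapunovIntegrand]

end Matrix

theorem stmt_3_general {n : ℕ} (A Q : Matrix (Fin n) (Fin n) ℝ)
    (hA : ∀ μ ∈ spectrum ℂ (A.map Complex.ofReal), μ.re < 0)
    (hQ : Q.PosDef) :
    ∀ P : Matrix (Fin n) (Fin n) ℝ,
      P = Matrix.of (fun i j => ∫ t in Set.Ici (0 : ℝ),
          (NormedSpace.exp (t • Aᵀ) * Q * NormedSpace.exp (t • A)) i j) →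
      (∀ i j, IntegrableOn
          (fun t : ℝ => (NormedSpace.exp (t • Aᵀ) * Q * NormedSpace.exp (t • A)) i j)
          (Set.Ici 0)) ∧
        P.IsSymm ∧ P.PosDef ∧ Aᵀ * P + P * A = -Q := by
  rintro P rfl
  have hP := Matrix.posDef_lyapunovIntegral hA hQ
  exact ⟨Matrix.integrableOn_lyapunovIntegrand_apply hA Q,
    isHermitian_iff_isSymm.1 hP.isHermitian, hP,
    Matrix.transpose_mul_lyapunovIntegral_add_lyapunovIntegral_mul hA Q⟩

/-- If `A` is Hurwitz and `Q` is symmetric positive definite, then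
`t ↦ exp (t • Aᵀ) * Q * exp (t • A)` is (entrywise) integrable on `[0, ∞)`, and the entrywise
integral `P = ∫₀^∞ exp (t • Aᵀ) * Q * exp (t • A) dt` is symmetric positive definite and
solves the Lyapunov equation `Aᵀ * P + P * A = -Q`. -/
theorem stmt_3 {n : ℕ} (A Q : Matrix (Fin n) (Fin n) ℝ)
    (hA : ∀ μ ∈ spectrum ℂ (A.map Complex.ofReal), μ.re < 0)
    (hQsymm : Q.IsSymm) (hQ : Q.PosDef) :
    ∀ P : Matrix (Fin n) (Fin n) ℝ,
      P = Matrix.of (fun i j => ∫ t in Set.Ici (0 : ℝ),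
          (NormedSpace.exp (t • Aᵀ) * Q * NormedSpace.exp (t • A)) i j) →
      (∀ i j, IntegrableOn
          (fun t : ℝ => (NormedSpace.exp (t • Aᵀ) * Q * NormedSpace.exp (t • A)) i j)
          (Set.Ici 0)) ∧
        P.IsSymm ∧ P.PosDef ∧ Aᵀ * P + P * A = -Q :=
  stmt_3_general A Q hA hQ
end

section
/- Let (Ω, ℱ, ℙ) be a probability space. Let r > 0, let N : Ω → ℕ be a random variable whose law is the Poisson distribution with rate r, and let (X_i)_{i∈ℕ} be random variables with values in a measurable space E, identically distributed with common law μ, such that the family consisting of N together with all the X_i is independent. Let f : E → ℝ be measurable with ∫ |f| dμ < ∞. Then the random variable ∏_{i=0}^{N-1} (1 + f(X_i)) is integrable and E[ ∏_{i=0}^{N-1} (1 + f(X_i)) ] = exp( r · ∫ f dμ ). -/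
open MeasureTheory ProbabilityTheory

/-- The index family for the joint independence of a counting variable `N : Ω → ℕ`
(at index `none`) together with a sequence of `E`-valued variables (at indices `some i`). -/
abbrev NXFam (E : Type*) : Option ℕ → Type _ :=
  fun o => match o with
  | none => ULift ℕ
  | some _ => E

/-- The canonical measurable space structures on `NXFam E`. -/
def NXFamMeas (E : Type*) [MeasurableSpace E] : ∀ o, MeasurableSpace (NXFam E o) :=
  fun o => match o with
  | none => inferInstance
  | some _ => inferInstance

/-- The family of random variables consisting of `N` (at index `none`) and the `X i`
(at indices `some i`). -/
def NXFun {Ω E : Type*} (N : Ω → ℕ) (X : ℕ → Ω → E) : ∀ o, Ω → NXFam E o :=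
  fun o => match o with
  | none => fun ω => ULift.up (N ω)
  | some i => X i

/-!
On the event `{N = n}` the product is `∏_{i<n} (1 + f (X i))`, and by independence its
expectation there is `P(N = n) * (1 + ∫ f dμ) ^ n`. Summing the Poisson weights
`e^{-r} r^n / n!` against `c ^ n` gives the generating function `exp (r * (c - 1))`, evaluated
at `c = 1 + ∫ f dμ`. The same computation with `|1 + f|` shows that the integrals of the
absolute values over the events `{N = n}` are summable, which gives integrability and justifies
summing over `n`.
-/

open Finset
open scoped NNReal

theorem ProbabilityTheory.hasSum_poissonMeasure_real_singleton_mul_pow (r : ℝ≥0) (c : ℝ) :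
    HasSum (fun n => (poissonMeasure r).real {n} * c ^ n) (Real.exp (r * (c - 1))) := by
  have h := (NormedSpace.expSeries_div_hasSum_exp ((r : ℝ) * c)).mul_left (Real.exp (-r))
  rw [← Real.exp_eq_exp_ℝ, ← Real.exp_add, neg_add_eq_sub, ← mul_sub_one] at h
  refine h.congr_fun fun n => ?_
  rw [poissonMeasure_real_singleton, mul_pow]
  ring

section

variable {Ω : Type*} [MeasurableSpace Ω] {P : Measure Ω}

theorem ProbabilityTheory.iIndepFun.integrable_prod_and_integral_prod {ι : Type*}
    {Z : ι → Ω → ℝ} (hZ : iIndepFun Z P) (hZi : ∀ i, Integrable (Z i) P) (s : Finset ι) :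
    Integrable (∏ i ∈ s, Z i) P ∧ ∫ ω, (∏ i ∈ s, Z i) ω ∂P = ∏ i ∈ s, ∫ ω, Z i ω ∂P := by
  have := hZ.isProbabilityMeasure
  classical
  induction s using Finset.induction_on with
  | empty => exact ⟨integrable_const (1 : ℝ), by simp⟩
  | insert a s ha ih =>
    have hindep : IndepFun (∏ j ∈ s, Z j) (Z a) P :=
      hZ.indepFun_finsetProd_of_notMem₀ (fun i => (hZi i).aemeasurable) ha
    rw [prod_insert ha, prod_insert ha, mul_comm (Z a), mul_comm (∫ ω, Z a ω ∂P), ← ih.2]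
    exact ⟨hindep.integrable_mul ih.1 (hZi a), hindep.integral_mul_eq_mul_integral
      ih.1.aestronglyMeasurable (hZi a).aestronglyMeasurable⟩

theorem integrable_and_hasSum_setIntegral_preimage_singleton {N : Ω → ℕ} (hN : Measurable N)
    {F : ℕ → Ω → ℝ} (hF : ∀ n, IntegrableOn (F n) (N ⁻¹' {n}) P)
    (hsum : Summable fun n => ∫ ω in N ⁻¹' {n}, ‖F n ω‖ ∂P) :
    Integrable (fun ω => F (N ω) ω) P ∧
      HasSum (fun n => ∫ ω in N ⁻¹' {n}, F n ω ∂P) (∫ ω, F (N ω) ω ∂P) := by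
  have hmeas n : MeasurableSet (N ⁻¹' {n}) := hN (measurableSet_singleton n)
  have heq n : Set.EqOn (fun ω => F (N ω) ω) (F n) (N ⁻¹' {n}) :=
    fun ω hω => congrFun (congrArg F hω) ω
  have hunion : ⋃ n, N ⁻¹' {n} = Set.univ := by ext; simp
  have hdisj : Pairwise (Function.onFun Disjoint fun n => N ⁻¹' {n}) :=
    fun m n h => (Set.disjoint_singleton.2 h).preimage N
  have hint : Integrable (fun ω => F (N ω) ω) P := by
    rw [← integrableOn_univ, ← hunion]
    refine integrableOn_iUnion_of_summable_integral_norm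
      (fun n => (hF n).congr_fun (heq n).symm (hmeas n)) ?_
    exact hsum.congr fun n =>
      setIntegral_congr_fun (hmeas n) fun ω hω => (congrArg norm (heq n hω)).symm
  refine ⟨hint, ?_⟩
  have := hasSum_integral_iUnion hmeas hdisj (by rw [hunion]; exact hint.integrableOn)
  rwa [hunion, setIntegral_univ, funext fun n => setIntegral_congr_fun (hmeas n) (heq n)] at this

end

theorem integrableOn_and_setIntegral_prod_comp_preimage_singleton {Ω E : Type*}
    [MeasurableSpace Ω] [MeasurableSpace E] {P : Measure Ω} {μ : Measure E} {N : Ω → ℕ}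
    {X : ℕ → Ω → E} (hN : Measurable N) (hX : ∀ i, Measurable (X i))
    (hXlaw : ∀ i, P.map (X i) = μ) (hindep : iIndepFun (m := NXFamMeas E) (NXFun N X) P)
    {h : E → ℝ} (hh : Measurable h) (hhint : Integrable h μ) (n : ℕ) :
    IntegrableOn (fun ω => ∏ i ∈ range n, h (X i ω)) (N ⁻¹' {n}) P ∧
      ∫ ω in N ⁻¹' {n}, ∏ i ∈ range n, h (X i ω) ∂P = P.real (N ⁻¹' {n}) * (∫ x, h x ∂μ) ^ n := by
  have := hindep.isProbabilityMeasure
  have hmeas : MeasurableSet (N ⁻¹' {n}) := hN (measurableSet_singleton n)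
  let g : ∀ o, NXFam E o → ℝ
    | none => fun k => if k.down = n then 1 else 0
    | some _ => h
  have hg : ∀ o, Measurable[NXFamMeas E o] (g o)
    | none => (measurable_of_countable fun k : ℕ => if k = n then (1 : ℝ) else 0).comp
        measurable_down
    | some _ => hh
  let Z o := g o ∘ NXFun N X o
  have hZ : iIndepFun Z P := hindep.comp g hg
  have hZnone : Z none = (N ⁻¹' {n}).indicator 1 := by
    ext ω
    by_cases hω : N ω = n <;> simp [Z, g, NXFun, hω]
  have hZi : ∀ o, Integrable (Z o) P
    | none => hZnone ▸ (integrable_const 1).indicator hmeas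
    | some i => (hXlaw i ▸ hhint).comp_measurable (hX i)
  have hprod : ∏ o ∈ insertNone (range n), Z o =
      (N ⁻¹' {n}).indicator fun ω => ∏ i ∈ range n, h (X i ω) := by
    ext ω
    by_cases hω : N ω = n <;> simp [prod_insertNone, hω, Z, g, NXFun]
  obtain ⟨hint, hintegral⟩ := hZ.integrable_prod_and_integral_prod hZi (insertNone (range n))
  rw [hprod, integrable_indicator_iff hmeas] at hint
  rw [hprod, integral_indicator hmeas, prod_insertNone, hZnone,
    integral_indicator_one hmeas] at hintegral
  refine ⟨hint, hintegral.trans ?_⟩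
  have hXint i : ∫ ω, Z (some i) ω ∂P = ∫ x, h x ∂μ := by
    rw [← hXlaw i, integral_map (hX i).aemeasurable hh.aestronglyMeasurable]
    rfl
  simp [hXint]

theorem stmt_4_general {Ω : Type*} [MeasurableSpace Ω] (P : Measure Ω)
    {E : Type*} [MeasurableSpace E] (r : NNReal)
    (N : Ω → ℕ) (hN : Measurable N) (hNlaw : P.map N = poissonMeasure r)
    (X : ℕ → Ω → E) (hX : ∀ i, Measurable (X i))
    (μ : Measure E) [IsProbabilityMeasure μ] (hXlaw : ∀ i, P.map (X i) = μ)
    (hindep : iIndepFun (m := NXFamMeas E) (NXFun N X) P)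
    (f : E → ℝ) (hf : Measurable f) (hfint : Integrable f μ) :
    Integrable (fun ω => ∏ i ∈ Finset.range (N ω), (1 + f (X i ω))) P ∧
      ∫ ω, ∏ i ∈ Finset.range (N ω), (1 + f (X i ω)) ∂P =
        Real.exp (r * ∫ x, f x ∂μ) := by
  have hlaw n : P.real (N ⁻¹' {n}) = (poissonMeasure r).real {n} := by
    rw [← hNlaw, map_measureReal_apply hN (measurableSet_singleton n)]
  have hlevel {h : E → ℝ} (hh : Measurable h) (hhint : Integrable h μ) :=
    integrableOn_and_setIntegral_prod_comp_preimage_singleton hN hX hXlaw hindep hh hhint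
  have h1f : Integrable (fun x => 1 + f x) μ := (integrable_const 1).add hfint
  have h1fm : Measurable (fun x => 1 + f x) := measurable_const.add hf
  obtain ⟨hF, hFint⟩ := forall_and.1 (hlevel (h := fun x => 1 + f x) h1fm h1f)
  have hFnorm n := (hlevel (h := fun x => |1 + f x|) h1fm.abs h1f.abs n).2
  have hsum : Summable fun n => ∫ ω in N ⁻¹' {n}, ‖∏ i ∈ range n, (1 + f (X i ω))‖ ∂P := by
    simp only [norm_prod, Real.norm_eq_abs, hFnorm, hlaw]
    exact (hasSum_poissonMeasure_real_singleton_mul_pow r _).summable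
  obtain ⟨hint, hasSum⟩ := integrable_and_hasSum_setIntegral_preimage_singleton hN hF hsum
  refine ⟨hint, hasSum.unique ?_⟩
  simp only [hFint, hlaw, integral_add (integrable_const 1) hfint, integral_const, probReal_univ,
    one_smul]
  simpa using hasSum_poissonMeasure_real_singleton_mul_pow r (1 + ∫ x, f x ∂μ)

/-- Campbell-type formula for a compound Poisson product: if `N` is Poisson
with rate `r`, the `X i` are identically distributed with law `μ`, the family `{N} ∪ {X i}` is
independent, and `f` is `μ`-integrable, then `∏_{i<N} (1 + f (X i))` is integrable with
expectation `exp (r * ∫ f dμ)`. -/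
theorem stmt_4 {Ω : Type*} [MeasurableSpace Ω] (P : Measure Ω) [IsProbabilityMeasure P]
    {E : Type*} [MeasurableSpace E] (r : NNReal) (hr : 0 < r)
    (N : Ω → ℕ) (hN : Measurable N) (hNlaw : P.map N = poissonMeasure r)
    (X : ℕ → Ω → E) (hX : ∀ i, Measurable (X i))
    (μ : Measure E) [IsProbabilityMeasure μ] (hXlaw : ∀ i, P.map (X i) = μ)
    (hindep : iIndepFun (m := NXFamMeas E) (NXFun N X) P)
    (f : E → ℝ) (hf : Measurable f) (hfint : Integrable f μ) :
    Integrable (fun ω => ∏ i ∈ Finset.range (N ω), (1 + f (X i ω))) P ∧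
      ∫ ω, ∏ i ∈ Finset.range (N ω), (1 + f (X i ω)) ∂P =
        Real.exp (r * ∫ x, f x ∂μ) :=
  stmt_4_general P r N hN hNlaw X hX μ hXlaw hindep f hf hfint
end

section
/- Let (Ω, ℱ, ℙ) be a probability space and let t > 0, λ > 0, α > 0. Let N : Ω → ℕ have law the Poisson distribution with rate λ·t; let (U_i)_{i∈ℕ} be identically distributed random variables, each uniformly distributed on the interval [0, t]; let (X_i)_{i∈ℕ} be identically distributed random variables with values in a measurable space E and common law μ; and suppose the family consisting of N, all the U_i, and all the X_i is independent. Let f : E → ℝ be measurable with ∫ |f| dμ < ∞. Then E[ ∑_{i=0}^{N-1} e^{-α·(t - U_i)} · f(X_i) ] = ((1 - e^{-α·t})/α) · λ · ∫ f dμ. -/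
open MeasureTheory ProbabilityTheory

/-- The index family for the joint independence of a counting variable `N : Ω → ℕ`
(at index `none`), a sequence of real-valued variables `U i` (at indices `some (inl i)`),
and a sequence of `E`-valued variables `X i` (at indices `some (inr i)`). -/
abbrev NUXFam (E : Type*) : Option (ℕ ⊕ ℕ) → Type _ :=
  fun o => match o with
  | none => ULift ℕ
  | some (Sum.inl _) => ULift ℝ
  | some (Sum.inr _) => E

/-- The canonical measurable space structures on `NUXFam E`. -/
def NUXFamMeas (E : Type*) [MeasurableSpace E] : ∀ o, MeasurableSpace (NUXFam E o) :=
  fun o => match o with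
  | none => inferInstance
  | some (Sum.inl _) => inferInstance
  | some (Sum.inr _) => inferInstance

/-- The family of random variables consisting of `N` (at index `none`), the `U i`
(at indices `some (inl i)`) and the `X i` (at indices `some (inr i)`). -/
def NUXFun {Ω E : Type*} (N : Ω → ℕ) (U : ℕ → Ω → ℝ) (X : ℕ → Ω → E) :
    ∀ o, Ω → NUXFam E o :=
  fun o => match o with
  | none => fun ω => ULift.up (N ω)
  | some (Sum.inl i) => fun ω => ULift.up (U i ω)
  | some (Sum.inr i) => X i

/-! Write the sum as `∑' i, 1{i < N} • Y i` with `Y i = exp (-α (t - U i)) * f (X i)`.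
Since `N` is independent of `(U i, X i)`, the `i`-th term has mean `P(N > i) * E[Y i]`, and
`E[Y i] = (1 - e^{-αt}) / (αt) * ∫ f dμ` because `U i` and `X i` are independent. The tail sum
`∑ i, P(N > i) = E[N] = λt` then gives the formula. Sum and integral may be exchanged because
`E|Y i|` is bounded uniformly in `i` and `E[N] < ∞`. -/

open Real
open scoped NNReal ENNReal Nat

section TailSum

variable {Ω : Type*} [MeasurableSpace Ω] {P : Measure Ω} {N : Ω → ℕ}

lemma natCast_eq_tsum_indicator_Ioi (n : ℕ) :
    (n : ℝ≥0∞) = ∑' i : ℕ, (Set.Ioi i).indicator 1 n := by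
  rw [tsum_eq_sum (s := Finset.range n) (fun i hi => by simpa using hi)]
  simp +contextual [Set.indicator_apply, Finset.filter_true_of_mem]

lemma lintegral_natCast_eq_tsum_measure_preimage_Ioi (hN : Measurable N) :
    ∫⁻ ω, (N ω : ℝ≥0∞) ∂P = ∑' i, P (N ⁻¹' Set.Ioi i) := by
  simp_rw [natCast_eq_tsum_indicator_Ioi]
  rw [lintegral_tsum (f := fun i ω => (Set.Ioi i).indicator 1 (N ω))
    fun i => ((measurable_one.indicator measurableSet_Ioi).comp hN).aemeasurable]
  refine tsum_congr fun i => ?_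
  rw [← lintegral_indicator_one (hN measurableSet_Ioi)]
  rfl

lemma hasSum_measureReal_preimage_Ioi (hN : Measurable N)
    (hN_int : Integrable (fun ω => (N ω : ℝ)) P) :
    HasSum (fun i => P.real (N ⁻¹' Set.Ioi i)) (∫ ω, (N ω : ℝ) ∂P) := by
  have hlint : ∫⁻ ω, ENNReal.ofReal (N ω) ∂P = ∑' i, P (N ⁻¹' Set.Ioi i) := by
    simp_rw [ENNReal.ofReal_natCast]
    exact lintegral_natCast_eq_tsum_measure_preimage_Ioi hN
  have hfin : ∑' i, P (N ⁻¹' Set.Ioi i) ≠ ∞ := hlint ▸ hN_int.lintegral_lt_top.ne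
  rw [integral_eq_lintegral_of_nonneg_ae (.of_forall fun ω => by positivity)
    hN_int.aestronglyMeasurable, hlint,
    ENNReal.tsum_toReal_eq (ENNReal.ne_top_of_tsum_ne_top hfin)]
  exact ENNReal.hasSum_toReal hfin

end TailSum

section PoissonMean

lemma hasSum_poisson_mul_natCast (r : ℝ≥0) :
    HasSum (fun n : ℕ => exp (-r) * r ^ n / n ! * n) r := by
  have hshift :
      HasSum (fun n : ℕ => exp (-r) * r ^ (n + 1) / (n + 1)! * ((n + 1 : ℕ) : ℝ)) r := by
    have h := (hasSum_one_poissonMeasure r).mul_left (r : ℝ)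
    rw [mul_one] at h
    refine h.congr_fun fun n => ?_
    rw [Nat.factorial_succ]
    push_cast
    field_simp
    ring
  have h := (hasSum_nat_add_iff (f := fun n : ℕ => exp (-r) * r ^ n / n ! * n) 1).mp hshift
  simpa only [Finset.sum_range_one, Nat.cast_zero, mul_zero, add_zero] using h

lemma integrable_natCast_poissonMeasure (r : ℝ≥0) :
    Integrable (fun n : ℕ => (n : ℝ)) (poissonMeasure r) := by
  rw [integrable_poissonMeasure_iff]
  simpa using (hasSum_poisson_mul_natCast r).summable

lemma integral_natCast_poissonMeasure (r : ℝ≥0) :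
    ∫ n, (n : ℝ) ∂poissonMeasure r = r := by
  rw [integral_poissonMeasure]
  simpa using (hasSum_poisson_mul_natCast r).tsum_eq

variable {Ω : Type*} [MeasurableSpace Ω] {P : Measure Ω} {N : Ω → ℕ} {r : ℝ≥0}

lemma integrable_natCast_of_map_eq_poissonMeasure (hN : Measurable N)
    (hlaw : P.map N = poissonMeasure r) : Integrable (fun ω => (N ω : ℝ)) P :=
  (integrable_map_measure .of_discrete hN.aemeasurable).mp
    (hlaw ▸ integrable_natCast_poissonMeasure r)

lemma integral_natCast_of_map_eq_poissonMeasure (hN : Measurable N)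
    (hlaw : P.map N = poissonMeasure r) : ∫ ω, (N ω : ℝ) ∂P = r := by
  rw [← integral_map hN.aemeasurable .of_discrete, hlaw, integral_natCast_poissonMeasure]

end PoissonMean

section Wald

variable {Ω E α : Type*} [MeasurableSpace Ω] {P : Measure Ω} [MeasurableSpace α]
  [NormedAddCommGroup E] [NormedSpace ℝ E] [MeasurableSpace E] [BorelSpace E]

lemma ProbabilityTheory.IndepFun.integral_indicator_comp_smul {N : Ω → α} {Y : Ω → E}
    (h : IndepFun N Y P) (hN : Measurable N) (hY : AEStronglyMeasurable Y P) {s : Set α}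
    (hs : MeasurableSet s) :
    ∫ ω, s.indicator (1 : α → ℝ) (N ω) • Y ω ∂P = P.real (N ⁻¹' s) • ∫ ω, Y ω ∂P := by
  have hind : Measurable (s.indicator (1 : α → ℝ)) := measurable_one.indicator hs
  have h_ind : IndepFun (fun ω => s.indicator (1 : α → ℝ) (N ω)) Y P :=
    h.comp hind measurable_id
  rw [h_ind.integral_fun_smul_eq_smul_integral (hind.comp hN).aestronglyMeasurable hY,
    ← integral_indicator_one (hN hs)]
  rfl

lemma ProbabilityTheory.IndepFun.integral_mul_comp_of_map_eq {V : Ω → ℝ} {X : Ω → α}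
    {μ : Measure α} {f : α → ℝ} (h : IndepFun V X P) (hV : AEStronglyMeasurable V P)
    (hX : Measurable X) (hXlaw : P.map X = μ) (hf : AEStronglyMeasurable f μ) :
    ∫ ω, V ω * f (X ω) ∂P = (∫ ω, V ω ∂P) * ∫ x, f x ∂μ := by
  subst hXlaw
  rw [integral_map hX.aemeasurable hf]
  exact h.integral_fun_comp_mul_comp (f := id) hV.aemeasurable hX.aemeasurable
    hV.aestronglyMeasurable_id_map hf

theorem integral_sum_range_eq_smul_of_indepFun {N : Ω → ℕ} {Y : ℕ → Ω → E} {m : E} {C : ℝ}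
    (hN : Measurable N) (hN_int : Integrable (fun ω => (N ω : ℝ)) P)
    (hY : ∀ i, Integrable (Y i) P) (hindep : ∀ i, IndepFun N (Y i) P)
    (hmean : ∀ i, ∫ ω, Y i ω ∂P = m) (hnorm : ∀ i, ∫ ω, ‖Y i ω‖ ∂P ≤ C) :
    ∫ ω, ∑ i ∈ Finset.range (N ω), Y i ω ∂P = (∫ ω, (N ω : ℝ) ∂P) • m := by
  set F : ℕ → Ω → E := fun i ω => (Set.Ioi i).indicator (1 : ℕ → ℝ) (N ω) • Y i ω
  have hind (i : ℕ) : Measurable fun ω => (Set.Ioi i).indicator (1 : ℕ → ℝ) (N ω) :=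
    (measurable_one.indicator measurableSet_Ioi).comp hN
  have hF_sum (ω : Ω) : ∑ i ∈ Finset.range (N ω), Y i ω = ∑' i, F i ω := by
    rw [tsum_eq_sum (s := Finset.range (N ω)) fun i hi => by simp_all [F]]
    exact Finset.sum_congr rfl fun i hi => by simp_all [F]
  have hF_int (i : ℕ) : Integrable (F i) P :=
    (hY i).bdd_smul 1 (hind i).aestronglyMeasurable
      (.of_forall fun ω => by by_cases h : i < N ω <;> simp [h])
  have hF_norm (i : ℕ) :
      ∫ ω, ‖F i ω‖ ∂P = P.real (N ⁻¹' Set.Ioi i) * ∫ ω, ‖Y i ω‖ ∂P := by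
    have h_norm : IndepFun N (fun ω => ‖Y i ω‖) P :=
      (hindep i).comp measurable_id measurable_norm
    rw [← smul_eq_mul, ← h_norm.integral_indicator_comp_smul hN (hY i).norm.aestronglyMeasurable
      measurableSet_Ioi]
    congr 1 with ω
    by_cases h : i < N ω <;> simp [F, h]
  have htail := hasSum_measureReal_preimage_Ioi hN hN_int
  have hF_summable : Summable fun i => ∫ ω, ‖F i ω‖ ∂P := by
    refine (htail.summable.mul_right C).of_nonneg_of_le
      (fun i => integral_nonneg fun _ => norm_nonneg _) fun i => ?_
    rw [hF_norm]
    exact mul_le_mul_of_nonneg_left (hnorm i) measureReal_nonneg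
  calc ∫ ω, ∑ i ∈ Finset.range (N ω), Y i ω ∂P
      = ∫ ω, ∑' i, F i ω ∂P := by simp_rw [hF_sum]
    _ = ∑' i, ∫ ω, F i ω ∂P := (integral_tsum_of_summable_integral_norm hF_int hF_summable).symm
    _ = ∑' i, P.real (N ⁻¹' Set.Ioi i) • m := by
      congr with i
      rw [(hindep i).integral_indicator_comp_smul hN (hY i).aestronglyMeasurable
        measurableSet_Ioi, hmean]
    _ = (∫ ω, (N ω : ℝ) ∂P) • m := (htail.smul_const m).tsum_eq

end Wald

section Uniform

variable {Ω : Type*} [MeasurableSpace Ω] {P : Measure Ω} {U : Ω → ℝ} {t : ℝ}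

lemma integrable_comp_of_map_eq_uniform (hU : Measurable U)
    (hlaw : P.map U = (ENNReal.ofReal t)⁻¹ • volume.restrict (Set.Icc 0 t)) (ht : 0 < t)
    {g : ℝ → ℝ} (hg : Continuous g) :
    Integrable (fun ω => g (U ω)) P := by
  have hg_int : Integrable g (P.map U) := by
    rw [hlaw]
    exact hg.integrableOn_Icc.smul_measure (by simp [ht])
  exact hg_int.comp_measurable hU

lemma integral_comp_of_map_eq_uniform (hU : Measurable U)
    (hlaw : P.map U = (ENNReal.ofReal t)⁻¹ • volume.restrict (Set.Icc 0 t)) (ht : 0 ≤ t)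
    {g : ℝ → ℝ} (hg : Continuous g) :
    ∫ ω, g (U ω) ∂P = t⁻¹ * ∫ u in 0..t, g u := by
  rw [← integral_map hU.aemeasurable hg.aestronglyMeasurable, hlaw, integral_smul_measure,
    integral_Icc_eq_integral_Ioc, ← intervalIntegral.integral_of_le ht, ENNReal.toReal_inv,
    ENNReal.toReal_ofReal ht, smul_eq_mul]

end Uniform

lemma integral_exp_neg_mul_sub {α : ℝ} (hα : α ≠ 0) (t : ℝ) :
    ∫ u in 0..t, exp (-α * (t - u)) = (1 - exp (-α * t)) / α := by
  have h (u : ℝ) : exp (-α * (t - u)) = exp (α * u + -α * t) := by ring_nf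
  simp_rw [h]
  rw [intervalIntegral.integral_comp_mul_add exp hα, integral_exp]
  simp only [mul_zero, zero_add, neg_mul, add_neg_cancel, exp_zero]
  ring

namespace NUXFun

variable {Ω E : Type*} [MeasurableSpace Ω] [MeasurableSpace E] {P : Measure Ω}
  {N : Ω → ℕ} {U : ℕ → Ω → ℝ} {X : ℕ → Ω → E}

lemma indepFun_U_X (hindep : iIndepFun (m := NUXFamMeas E) (NUXFun N U X) P) (i : ℕ) :
    IndepFun (U i) (X i) P :=
  (hindep.indepFun (i := some (.inl i)) (j := some (.inr i)) (by simp)).comp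
    measurable_down measurable_id

lemma indepFun_N_UX (hindep : iIndepFun (m := NUXFamMeas E) (NUXFun N U X) P)
    (hN : Measurable N) (hU : ∀ i, Measurable (U i)) (hX : ∀ i, Measurable (X i)) (i : ℕ) :
    IndepFun N (fun ω => (U i ω, X i ω)) P := by
  have hmeas : ∀ o, Measurable[_, NUXFamMeas E o] (NUXFun N U X o)
    | none => measurable_up.comp hN
    | some (.inl j) => measurable_up.comp (hU j)
    | some (.inr j) => hX j
  exact (hindep.indepFun_prodMk hmeas (some (.inl i)) (some (.inr i)) none (by simp)
    (by simp)).symm.comp measurable_down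
      ((measurable_down.comp measurable_fst).prodMk measurable_snd)

end NUXFun

theorem stmt_5_general {Ω : Type*} [MeasurableSpace Ω] (P : Measure Ω)
    {E : Type*} [MeasurableSpace E] (t lam α : ℝ) (ht : 0 < t) (hlam : 0 < lam) (hα : 0 < α)
    (N : Ω → ℕ) (hN : Measurable N) (hNlaw : P.map N = poissonMeasure ((lam * t).toNNReal))
    (U : ℕ → Ω → ℝ) (hU : ∀ i, Measurable (U i))
    (hUlaw : ∀ i, P.map (U i) = (ENNReal.ofReal t)⁻¹ • volume.restrict (Set.Icc 0 t))
    (X : ℕ → Ω → E) (hX : ∀ i, Measurable (X i))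
    (μ : Measure E) (hXlaw : ∀ i, P.map (X i) = μ)
    (hindep : iIndepFun (m := NUXFamMeas E) (NUXFun N U X) P)
    (f : E → ℝ) (hf : Measurable f) (hfint : Integrable f μ) :
    ∫ ω, ∑ i ∈ Finset.range (N ω), Real.exp (-α * (t - U i ω)) * f (X i ω) ∂P =
      ((1 - Real.exp (-α * t)) / α) * (lam * ∫ x, f x ∂μ) := by
  set g : ℝ → ℝ := fun u => exp (-α * (t - u))
  have hg : Continuous g := by fun_prop
  have hg_nonneg (u : ℝ) : 0 ≤ g u := exp_nonneg _
  set c : ℝ := t⁻¹ * ((1 - exp (-α * t)) / α) with hc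
  have hgU_int (i : ℕ) : Integrable (fun ω => g (U i ω)) P :=
    integrable_comp_of_map_eq_uniform (hU i) (hUlaw i) ht hg
  have hgU_mean (i : ℕ) : ∫ ω, g (U i ω) ∂P = c := by
    rw [integral_comp_of_map_eq_uniform (hU i) (hUlaw i) ht.le hg, integral_exp_neg_mul_sub hα.ne']
  have hfX_int (i : ℕ) : Integrable (fun ω => f (X i ω)) P :=
    (hXlaw i ▸ hfint).comp_measurable (hX i)
  have hUX (i : ℕ) : IndepFun (fun ω => g (U i ω)) (X i) P :=
    (NUXFun.indepFun_U_X hindep i).comp hg.measurable measurable_id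
  have hNY (i : ℕ) : IndepFun N (fun ω => g (U i ω) * f (X i ω)) P :=
    (NUXFun.indepFun_N_UX hindep hN hU hX i).comp measurable_id
      ((hg.measurable.comp measurable_fst).mul (hf.comp measurable_snd))
  have hY_mean (i : ℕ) : ∫ ω, g (U i ω) * f (X i ω) ∂P = c * ∫ x, f x ∂μ := by
    rw [(hUX i).integral_mul_comp_of_map_eq (hgU_int i).1 (hX i) (hXlaw i) hfint.1, hgU_mean]
  have hY_norm (i : ℕ) : ∫ ω, ‖g (U i ω) * f (X i ω)‖ ∂P = c * ∫ x, ‖f x‖ ∂μ := by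
    simp_rw [norm_mul, Real.norm_of_nonneg (hg_nonneg _)]
    rw [(hUX i).integral_mul_comp_of_map_eq (hgU_int i).1 (hX i) (hXlaw i) hfint.1.norm, hgU_mean]
  rw [integral_sum_range_eq_smul_of_indepFun (Y := fun i ω => g (U i ω) * f (X i ω)) hN
    (integrable_natCast_of_map_eq_poissonMeasure hN hNlaw)
    (fun i => ((hUX i).comp measurable_id hf).integrable_mul (hgU_int i) (hfX_int i)) hNY hY_mean
    (fun i => (hY_norm i).le), integral_natCast_of_map_eq_poissonMeasure hN hNlaw,
    coe_toNNReal _ (by positivity), smul_eq_mul, hc]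
  field_simp

/-- If `N` is Poisson with rate `λ * t`, the `U i` are uniform on `[0, t]`,
the `X i` are identically distributed with law `μ`, the whole family is independent, and `f` is
`μ`-integrable, then `E[∑_{i<N} exp (-α (t - U i)) f (X i)] = ((1 - e^{-αt})/α) λ ∫ f dμ`. -/
theorem stmt_5 {Ω : Type*} [MeasurableSpace Ω] (P : Measure Ω) [IsProbabilityMeasure P]
    {E : Type*} [MeasurableSpace E] (t lam α : ℝ) (ht : 0 < t) (hlam : 0 < lam) (hα : 0 < α)
    (N : Ω → ℕ) (hN : Measurable N) (hNlaw : P.map N = poissonMeasure ((lam * t).toNNReal))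
    (U : ℕ → Ω → ℝ) (hU : ∀ i, Measurable (U i))
    (hUlaw : ∀ i, P.map (U i) = (ENNReal.ofReal t)⁻¹ • volume.restrict (Set.Icc 0 t))
    (X : ℕ → Ω → E) (hX : ∀ i, Measurable (X i))
    (μ : Measure E) [IsProbabilityMeasure μ] (hXlaw : ∀ i, P.map (X i) = μ)
    (hindep : iIndepFun (m := NUXFamMeas E) (NUXFun N U X) P)
    (f : E → ℝ) (hf : Measurable f) (hfint : Integrable f μ) :
    ∫ ω, ∑ i ∈ Finset.range (N ω), Real.exp (-α * (t - U i ω)) * f (X i ω) ∂P =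
      ((1 - Real.exp (-α * t)) / α) * (lam * ∫ x, f x ∂μ) :=
  stmt_5_general P t lam α ht hlam hα N hN hNlaw U hU hUlaw X hX μ hXlaw hindep f hf hfint
end

section
/- Let (Ω, ℱ, ℙ) be a probability space, let λ > 0, and let Q ≥ 1 be a natural number. Let N : Ω → ℕ have law the Poisson distribution with rate λ, and let (X_i)_{i∈ℕ} be real-valued identically distributed random variables with E[ |X_0|^Q ] < ∞, such that the family consisting of N together with all the X_i is independent. Then the compound sum S = ∑_{i=0}^{N-1} X_i satisfies E[ |S|^Q ] < ∞. -/
/-!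
By the power-mean inequality, `|∑_{i<N} X i|^Q ≤ N^(Q-1) ∑_{i<N} |X i|^Q`. Writing the random sum
as the series `∑' i, 1{i < N} N^(Q-1) |X i|^Q` and using that `N` is independent of each `X i`,
the expectation of the right-hand side is `E[N^Q] E[|X 0|^Q]` (a Wald identity in `[0, ∞]`, so no
integrability is needed). A Poisson variable has moments of all orders since `n^k ≤ (2^k)^n`.
-/

open MeasureTheory ProbabilityTheory

open Finset
open scoped ENNReal NNReal Nat

lemma ENNReal.pow_sum_le_card_mul_sum_pow {ι : Type*} (s : Finset ι) (f : ι → ℝ≥0∞) (q : ℕ) :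
    (∑ i ∈ s, f i) ^ (q + 1) ≤ (#s : ℝ≥0∞) ^ q * ∑ i ∈ s, f i ^ (q + 1) := by
  have h := ENNReal.rpow_sum_le_const_mul_sum_rpow (s := s) (f := f) (p := q + 1) (by simp)
  simpa [← ENNReal.rpow_natCast] using h

lemma enorm_sum_pow_le_card_mul_sum_pow {ι E : Type*} [TopologicalSpace E]
    [ESeminormedAddCommMonoid E] (s : Finset ι) (f : ι → E) (q : ℕ) :
    ‖∑ i ∈ s, f i‖ₑ ^ (q + 1) ≤ (#s : ℝ≥0∞) ^ q * ∑ i ∈ s, ‖f i‖ₑ ^ (q + 1) :=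
  (pow_le_pow_left' (enorm_sum_le s f) _).trans (ENNReal.pow_sum_le_card_mul_sum_pow s _ q)

lemma integrable_pow_poissonMeasure (r : ℝ≥0) (k : ℕ) :
    Integrable (fun n : ℕ => (n : ℝ) ^ k) (poissonMeasure r) := by
  rw [integrable_poissonMeasure_iff]
  refine .of_nonneg_of_le (fun n => by positivity) (fun n => ?_)
    ((Real.summable_pow_div_factorial (2 ^ k * r)).mul_left (Real.exp (-r)))
  have hpow : (n : ℝ) ^ k ≤ (2 ^ k) ^ n := by
    rw [← pow_mul, mul_comm, pow_mul]
    gcongr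
    exact_mod_cast Nat.lt_two_pow_self.le
  calc Real.exp (-r) * r ^ n / n ! * ‖(n : ℝ) ^ k‖
      = Real.exp (-r) * (r ^ n / n !) * (n : ℝ) ^ k := by
        rw [Real.norm_of_nonneg (by positivity)]; ring
    _ ≤ Real.exp (-r) * (r ^ n / n !) * (2 ^ k) ^ n := by gcongr
    _ = Real.exp (-r) * ((2 ^ k * r) ^ n / n !) := by ring

lemma lintegral_pow_poissonMeasure_lt_top (r : ℝ≥0) (k : ℕ) :
    ∫⁻ n, (n : ℝ≥0∞) ^ k ∂poissonMeasure r < ∞ := by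
  simpa [HasFiniteIntegral, enorm_pow] using (integrable_pow_poissonMeasure r k).hasFiniteIntegral

lemma tsum_ite_lt_mul_eq_mul_sum_range (n : ℕ) (a : ℝ≥0∞) (y : ℕ → ℝ≥0∞) :
    ∑' i, (if i < n then a else 0) * y i = a * ∑ i ∈ range n, y i := by
  rw [tsum_eq_sum (s := range n) (by simp_all), mul_sum]
  exact sum_congr rfl fun i hi => by simp_all

theorem lintegral_mul_sum_range_eq_of_indepFun {Ω : Type*} [MeasurableSpace Ω] {P : Measure Ω}
    {N : Ω → ℕ} {Y : ℕ → Ω → ℝ≥0∞} {M : ℝ≥0∞} (f : ℕ → ℝ≥0∞)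
    (hN : Measurable N) (hY : ∀ i, Measurable (Y i)) (hindep : ∀ i, IndepFun N (Y i) P)
    (hM : ∀ i, ∫⁻ ω, Y i ω ∂P = M) :
    ∫⁻ ω, f (N ω) * ∑ i ∈ range (N ω), Y i ω ∂P = (∫⁻ ω, f (N ω) * N ω ∂P) * M := by
  -- `g i (N ω)` is a function of `N` alone, hence independent of `Y i`
  set g : ℕ → ℕ → ℝ≥0∞ := fun i n => if i < n then f n else 0
  have hg : ∀ i, Measurable fun ω => g i (N ω) := fun i => (measurable_of_countable (g i)).comp hN
  calc ∫⁻ ω, f (N ω) * ∑ i ∈ range (N ω), Y i ω ∂P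
      = ∫⁻ ω, ∑' i, g i (N ω) * Y i ω ∂P := by simp only [g, tsum_ite_lt_mul_eq_mul_sum_range]
    _ = ∑' i, (∫⁻ ω, g i (N ω) ∂P) * M := by
        rw [lintegral_tsum (f := fun i ω => g i (N ω) * Y i ω)
          fun i => ((hg i).mul (hY i)).aemeasurable]
        congr 1 with i
        rw [← hM i, lintegral_mul_eq_lintegral_mul_lintegral_of_indepFun'' (hg i).aemeasurable
          (hY i).aemeasurable ((hindep i).comp (measurable_of_countable (g i)) measurable_id)]
    _ = (∫⁻ ω, f (N ω) * N ω ∂P) * M := by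
        rw [ENNReal.tsum_mul_right, ← lintegral_tsum fun i => (hg i).aemeasurable]
        congr 2 with ω
        simpa [g] using tsum_ite_lt_mul_eq_mul_sum_range (N ω) (f (N ω)) 1

lemma measurable_sum_range {Ω E : Type*} [MeasurableSpace Ω] [AddCommMonoid E] [MeasurableSpace E]
    [MeasurableAdd₂ E] {N : Ω → ℕ} {X : ℕ → Ω → E} (hN : Measurable N)
    (hX : ∀ i, Measurable (X i)) : Measurable fun ω => ∑ i ∈ range (N ω), X i ω :=
  (measurable_from_prod_countable_left (f := fun p : Ω × ℕ => ∑ i ∈ range p.2, X i p.1)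
    fun n => Finset.measurable_sum (range n) fun i _ => hX i).comp (measurable_id.prodMk hN)

lemma indepFun_of_iIndepFun_NXFun {Ω E : Type*} [MeasurableSpace Ω] [MeasurableSpace E]
    {P : Measure Ω} {N : Ω → ℕ} {X : ℕ → Ω → E}
    (hindep : iIndepFun (m := NXFamMeas E) (NXFun N X) P) (i : ℕ) : IndepFun N (X i) P :=
  (hindep.indepFun (Option.some_ne_none i).symm).comp measurable_down measurable_id

lemma lintegral_pow_lt_top_of_map_eq_poissonMeasure {Ω : Type*} [MeasurableSpace Ω]
    {P : Measure Ω} {N : Ω → ℕ} {r : ℝ≥0} (hN : Measurable N) (hNlaw : P.map N = poissonMeasure r)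
    (k : ℕ) : ∫⁻ ω, (N ω : ℝ≥0∞) ^ k ∂P < ∞ := by
  rw [← lintegral_map (f := fun n : ℕ => (n : ℝ≥0∞) ^ k) (measurable_of_countable _) hN, hNlaw]
  exact lintegral_pow_poissonMeasure_lt_top r k

theorem stmt_6_general {Ω : Type*} [MeasurableSpace Ω] (P : Measure Ω)
    (lam : NNReal) (Q : ℕ) (hQ : 1 ≤ Q)
    (N : Ω → ℕ) (hN : Measurable N) (hNlaw : P.map N = poissonMeasure lam)
    (X : ℕ → Ω → ℝ) (hX : ∀ i, Measurable (X i))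
    (hident : ∀ i, P.map (X i) = P.map (X 0))
    (hmom : Integrable (fun ω => |X 0 ω| ^ Q) P)
    (hindep : iIndepFun (m := NXFamMeas ℝ) (NXFun N X) P) :
    Integrable (fun ω => |∑ i ∈ Finset.range (N ω), X i ω| ^ Q) P := by
  obtain ⟨q, rfl⟩ : ∃ q, Q = q + 1 := Nat.exists_eq_add_of_le' hQ
  have hmomX : ∀ i, ∫⁻ ω, ‖X i ω‖ₑ ^ (q + 1) ∂P = ∫⁻ ω, ‖X 0 ω‖ₑ ^ (q + 1) ∂P := fun i =>
    (IdentDistrib.comp ⟨(hX i).aemeasurable, (hX 0).aemeasurable, hident i⟩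
      (by fun_prop : Measurable fun x : ℝ => ‖x‖ₑ ^ (q + 1))).lintegral_eq
  have hmomX0 : ∫⁻ ω, ‖X 0 ω‖ₑ ^ (q + 1) ∂P < ∞ := by
    simpa [HasFiniteIntegral, enorm_pow] using hmom.hasFiniteIntegral
  refine ⟨((measurable_sum_range hN hX).abs.pow_const _).aestronglyMeasurable, ?_⟩
  calc ∫⁻ ω, ‖|∑ i ∈ range (N ω), X i ω| ^ (q + 1)‖ₑ ∂P
      ≤ ∫⁻ ω, (N ω : ℝ≥0∞) ^ q * ∑ i ∈ range (N ω), ‖X i ω‖ₑ ^ (q + 1) ∂P :=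
        lintegral_mono fun ω => by
          simpa [enorm_pow] using enorm_sum_pow_le_card_mul_sum_pow (range (N ω)) (X · ω) q
    _ = (∫⁻ ω, (N ω : ℝ≥0∞) ^ q * N ω ∂P) * ∫⁻ ω, ‖X 0 ω‖ₑ ^ (q + 1) ∂P :=
        lintegral_mul_sum_range_eq_of_indepFun (Y := fun i ω => ‖X i ω‖ₑ ^ (q + 1)) (· ^ q) hN
          (fun i => by fun_prop) (fun i => (indepFun_of_iIndepFun_NXFun hindep i).comp measurable_id
            (by fun_prop : Measurable fun x : ℝ => ‖x‖ₑ ^ (q + 1))) hmomX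
    _ < ∞ := by
        simp_rw [← pow_succ]
        exact ENNReal.mul_lt_top (lintegral_pow_lt_top_of_map_eq_poissonMeasure hN hNlaw _) hmomX0

/-- A compound Poisson sum with summands having a finite `Q`-th absolute
moment has a finite `Q`-th absolute moment: if `N` is Poisson with rate `λ`, the `X i` are
identically distributed real random variables with `E[|X 0|^Q] < ∞`, and the family
`{N} ∪ {X i}` is independent, then `E[|∑_{i<N} X i|^Q] < ∞`. -/
theorem stmt_6 {Ω : Type*} [MeasurableSpace Ω] (P : Measure Ω) [IsProbabilityMeasure P]
    (lam : NNReal) (hlam : 0 < lam) (Q : ℕ) (hQ : 1 ≤ Q)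
    (N : Ω → ℕ) (hN : Measurable N) (hNlaw : P.map N = poissonMeasure lam)
    (X : ℕ → Ω → ℝ) (hX : ∀ i, Measurable (X i))
    (hident : ∀ i, P.map (X i) = P.map (X 0))
    (hmom : Integrable (fun ω => |X 0 ω| ^ Q) P)
    (hindep : iIndepFun (m := NXFamMeas ℝ) (NXFun N X) P) :
    Integrable (fun ω => |∑ i ∈ Finset.range (N ω), X i ω| ^ Q) P :=
  stmt_6_general P lam Q hQ N hN hNlaw X hX hident hmom hindep
end

section
/- Let (Ω, ℱ, ℙ) be a probability space, let r > 0, let M ≥ 0 be a real number, and let Q ≥ 1 be a natural number. Let N : Ω → ℕ have law the Poisson distribution with rate r, and let (X_i)_{i∈ℕ} be real-valued identically distributed random variables with common law μ satisfying ∫ |x|^j dμ(x) < ∞ for all 1 ≤ j ≤ Q, such that the family consisting of N together with all the X_i is independent. Then the random variable ∏_{i=0}^{N-1} ( 1 + M · ∑_{j=1}^{Q} |X_i|^j ) is integrable, and E[ ∏_{i=0}^{N-1} ( 1 + M · ∑_{j=1}^{Q} |X_i|^j ) ] = exp( r · M · ∑_{j=1}^{Q} ∫ |x|^j dμ(x)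 ); in particular this expectation is finite. -/
/-!
Split `Ω` along the events `{N = n}`. Since `N` is independent of the `X i`, the expectation of
`∏_{i<n} ψ (X i)` on `{N = n}`, with `ψ x = 1 + M ∑_{j=1}^{Q} |x|^j`, factorizes as
`P(N = n) c^n` where `c = ∫ ψ dμ = 1 + M ∑_{j=1}^{Q} ∫ |x|^j dμ`. Summing against the Poisson
weights gives `e^{-r} e^{rc} = e^{r(c-1)}`. Computing with lower Lebesgue integrals of the
nonnegative integrand makes the exchange of sum and integral free and yields integrability at once.
-/

open MeasureTheory ProbabilityTheory

open scoped ENNReal NNReal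
open Finset

section CompoundProduct

variable {Ω E : Type*} [MeasurableSpace Ω] [MeasurableSpace E] {P : Measure Ω}
  {N : Ω → ℕ} {X : ℕ → Ω → E}

lemma measurable_prod_range_of_measurable {β : Type*} [MeasurableSpace β] [CommMonoid β]
    [MeasurableMul₂ β] {f : ℕ → Ω → β} (hN : Measurable N)
    (hf : ∀ i, Measurable (f i)) : Measurable fun ω => ∏ i ∈ range (N ω), f i ω :=
  (measurable_from_prod_countable_right (f := fun p : ℕ × Ω => ∏ i ∈ range p.1, f i p.2)
    fun n => measurable_prod (range n) fun i _ => hf i).comp (hN.prodMk measurable_id)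

lemma setLIntegral_preimage_singleton_prod_of_iIndepFun
    (hindep : iIndepFun (m := NXFamMeas E) (NXFun N X) P) (hN : Measurable N)
    (hX : ∀ i, Measurable (X i)) {g : E → ℝ≥0∞} (hg : Measurable g) (n : ℕ) (s : Finset ℕ) :
    ∫⁻ ω in N ⁻¹' {n}, ∏ i ∈ s, g (X i ω) ∂P = P (N ⁻¹' {n}) * ∏ i ∈ s, ∫⁻ ω, g (X i ω) ∂P := by
  let φ : ∀ o, NXFam E o → ℝ≥0∞
    | none => fun u => ({n} : Set ℕ).indicator 1 u.down
    | some _ => g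
  have hφ : ∀ o, Measurable[NXFamMeas E o] (φ o)
    | none => (measurable_from_nat (f := ({n} : Set ℕ).indicator 1)).comp measurable_down
    | some _ => hg
  let Z o := φ o ∘ NXFun N X o
  have hZ : ∀ o, Measurable (Z o)
    | none => (hφ none).comp (measurable_up.comp hN)
    | some i => hg.comp (hX i)
  have hZnone : Z none = (N ⁻¹' {n}).indicator 1 := by
    ext ω; simp [Z, φ, NXFun, Set.indicator]
  have hZsome : ∀ i, Z (some i) = g ∘ X i := fun _ => rfl
  have hn : MeasurableSet (N ⁻¹' {n}) := hN (measurableSet_singleton n)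
  calc ∫⁻ ω in N ⁻¹' {n}, ∏ i ∈ s, g (X i ω) ∂P
      = ∫⁻ ω, ∏ o ∈ insertNone s, Z o ω ∂P := by
        rw [← lintegral_indicator hn]
        congr 1 with ω
        by_cases h : N ω = n <;> simp [prod_insertNone, hZnone, hZsome, h]
    _ = ∏ o ∈ insertNone s, ∫⁻ ω, Z o ω ∂P :=
        lintegral_prod_eq_prod_lintegral_of_indepFun _ _ (hindep.comp φ hφ) hZ
    _ = P (N ⁻¹' {n}) * ∏ i ∈ s, ∫⁻ ω, g (X i ω) ∂P := by
        simp only [prod_insertNone, hZnone, hZsome, lintegral_indicator_one hn, Function.comp_apply]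

lemma lintegral_prod_range_of_iIndepFun
    (hindep : iIndepFun (m := NXFamMeas E) (NXFun N X) P) (hN : Measurable N)
    (hX : ∀ i, Measurable (X i)) {g : E → ℝ≥0∞} (hg : Measurable g) :
    ∫⁻ ω, ∏ i ∈ range (N ω), g (X i ω) ∂P =
      ∑' n, P (N ⁻¹' {n}) * ∏ i ∈ range n, ∫⁻ ω, g (X i ω) ∂P := by
  have hunion : (⋃ n, N ⁻¹' {n}) = Set.univ := by ext ω; simp
  rw [← setLIntegral_univ, ← hunion, lintegral_iUnion (fun n => hN (measurableSet_singleton n))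
    (fun m n hmn => (Set.disjoint_singleton.2 hmn).preimage N)]
  refine tsum_congr fun n => ?_
  rw [← setLIntegral_preimage_singleton_prod_of_iIndepFun hindep hN hX hg]
  exact setLIntegral_congr_fun (hN (measurableSet_singleton n)) fun ω (hω : N ω = n) => by
    rw [hω]

end CompoundProduct

lemma tsum_poissonMeasure_singleton_mul_pow (r : ℝ≥0) {c : ℝ} (hc : 0 ≤ c) :
    ∑' n, poissonMeasure r {n} * ENNReal.ofReal c ^ n =
      ENNReal.ofReal (Real.exp (r * (c - 1))) := by
  have hsum : HasSum (fun n => Real.exp (-r) * (r * c) ^ n / n.factorial)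
      (Real.exp (r * (c - 1))) := by
    have := (NormedSpace.expSeries_div_hasSum_exp ((r : ℝ) * c)).mul_left (Real.exp (-r))
    rw [← Real.exp_eq_exp_ℝ, ← Real.exp_add, show -(r : ℝ) + r * c = r * (c - 1) by ring] at this
    simpa only [mul_div_assoc] using this
  rw [← hsum.tsum_eq, ENNReal.ofReal_tsum_of_nonneg (fun n => by positivity) hsum.summable]
  refine tsum_congr fun n => ?_
  rw [poissonMeasure_singleton, ← ENNReal.ofReal_pow hc, ← ENNReal.ofReal_mul (by positivity)]
  congr 1
  ring

lemma integrable_and_integral_eq_of_lintegral_ofReal_eq {α : Type*} [MeasurableSpace α]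
    {μ : Measure α} {f : α → ℝ} (hfm : AEStronglyMeasurable f μ) (hf : 0 ≤ᵐ[μ] f) {a : ℝ}
    (ha : 0 ≤ a) (h : ∫⁻ x, ENNReal.ofReal (f x) ∂μ = ENNReal.ofReal a) :
    Integrable f μ ∧ ∫ x, f x ∂μ = a :=
  ⟨⟨hfm, (hasFiniteIntegral_iff_ofReal hf).2 (h ▸ ENNReal.ofReal_lt_top)⟩,
    by rw [integral_eq_lintegral_of_nonneg_ae hf hfm, h, ENNReal.toReal_ofReal ha]⟩

theorem stmt_7_general {Ω : Type*} [MeasurableSpace Ω] (P : Measure Ω)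
    (r : NNReal) (M : ℝ) (hM : 0 ≤ M) (Q : ℕ)
    (N : Ω → ℕ) (hN : Measurable N) (hNlaw : P.map N = poissonMeasure r)
    (X : ℕ → Ω → ℝ) (hX : ∀ i, Measurable (X i))
    (μ : Measure ℝ) [IsProbabilityMeasure μ] (hXlaw : ∀ i, P.map (X i) = μ)
    (hmom : ∀ j, 1 ≤ j → j ≤ Q → Integrable (fun x => |x| ^ j) μ)
    (hindep : iIndepFun (m := NXFamMeas ℝ) (NXFun N X) P) :
    Integrable
        (fun ω => ∏ i ∈ Finset.range (N ω),
          (1 + M * ∑ j ∈ Finset.Icc 1 Q, |X i ω| ^ j)) P ∧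
      ∫ ω, ∏ i ∈ Finset.range (N ω), (1 + M * ∑ j ∈ Finset.Icc 1 Q, |X i ω| ^ j) ∂P =
        Real.exp (r * M * ∑ j ∈ Finset.Icc 1 Q, ∫ x, |x| ^ j ∂μ) := by
  set ψ : ℝ → ℝ := fun x => 1 + M * ∑ j ∈ Icc 1 Q, |x| ^ j
  have hψm : Measurable ψ := by fun_prop
  have hψ0 x : 0 ≤ ψ x := by positivity
  have hmom' : ∀ j ∈ Icc 1 Q, Integrable (fun x => |x| ^ j) μ :=
    fun j hj => hmom j (mem_Icc.1 hj).1 (mem_Icc.1 hj).2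
  have hsum : Integrable (fun x => M * ∑ j ∈ Icc 1 Q, |x| ^ j) μ :=
    (integrable_finsetSum _ hmom').const_mul M
  have hψint : Integrable ψ μ := (integrable_const 1).add hsum
  have hψμ : ∫ x, ψ x ∂μ = 1 + M * ∑ j ∈ Icc 1 Q, ∫ x, |x| ^ j ∂μ := by
    rw [integral_add (integrable_const 1) hsum,
      integral_const_mul, integral_finsetSum _ hmom']
    simp
  have hψX i : ∫⁻ ω, ENNReal.ofReal (ψ (X i ω)) ∂P = ENNReal.ofReal (∫ x, ψ x ∂μ) := by
    rw [ofReal_integral_eq_lintegral_ofReal hψint (.of_forall hψ0), ← hXlaw i,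
      lintegral_map (by fun_prop) (hX i)]
  refine integrable_and_integral_eq_of_lintegral_ofReal_eq
    (measurable_prod_range_of_measurable hN fun i => hψm.comp (hX i)).aestronglyMeasurable
    (.of_forall fun ω => prod_nonneg fun i _ => hψ0 _) (Real.exp_nonneg _) ?_
  calc ∫⁻ ω, ENNReal.ofReal (∏ i ∈ range (N ω), ψ (X i ω)) ∂P
      = ∫⁻ ω, ∏ i ∈ range (N ω), ENNReal.ofReal (ψ (X i ω)) ∂P := by
        simp_rw [ENNReal.ofReal_prod_of_nonneg fun i _ => hψ0 _]
    _ = ∑' n, poissonMeasure r {n} * ENNReal.ofReal (∫ x, ψ x ∂μ) ^ n := by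
        rw [lintegral_prod_range_of_iIndepFun hindep hN hX (g := fun x => ENNReal.ofReal (ψ x))
          (by fun_prop)]
        simp_rw [hψX, prod_const, card_range, ← hNlaw,
          Measure.map_apply hN (measurableSet_singleton _)]
    _ = _ := by
        rw [tsum_poissonMeasure_singleton_mul_pow r (integral_nonneg hψ0), hψμ]
        congr 2
        ring

/-- If `N` is Poisson with rate `r`, the `X i` are identically distributed
real random variables with common law `μ` having finite absolute moments up to order `Q`, the
family `{N} ∪ {X i}` is independent, and `M ≥ 0`, then the random variable
`∏_{i<N} (1 + M * ∑_{j=1}^{Q} |X i|^j)` is integrable with expectation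
`exp (r * M * ∑_{j=1}^{Q} ∫ |x|^j dμ)`; in particular this expectation is finite. -/
theorem stmt_7 {Ω : Type*} [MeasurableSpace Ω] (P : Measure Ω) [IsProbabilityMeasure P]
    (r : NNReal) (hr : 0 < r) (M : ℝ) (hM : 0 ≤ M) (Q : ℕ) (hQ : 1 ≤ Q)
    (N : Ω → ℕ) (hN : Measurable N) (hNlaw : P.map N = poissonMeasure r)
    (X : ℕ → Ω → ℝ) (hX : ∀ i, Measurable (X i))
    (μ : Measure ℝ) [IsProbabilityMeasure μ] (hXlaw : ∀ i, P.map (X i) = μ)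
    (hmom : ∀ j, 1 ≤ j → j ≤ Q → Integrable (fun x => |x| ^ j) μ)
    (hindep : iIndepFun (m := NXFamMeas ℝ) (NXFun N X) P) :
    Integrable
        (fun ω => ∏ i ∈ Finset.range (N ω),
          (1 + M * ∑ j ∈ Finset.Icc 1 Q, |X i ω| ^ j)) P ∧
      ∫ ω, ∏ i ∈ Finset.range (N ω), (1 + M * ∑ j ∈ Finset.Icc 1 Q, |X i ω| ^ j) ∂P =
        Real.exp (r * M * ∑ j ∈ Finset.Icc 1 Q, ∫ x, |x| ^ j ∂μ) :=
  stmt_7_general P r M hM Q N hN hNlaw X hX μ hXlaw hmom hindep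
end

section
/- Let l ≥ 1 and Q ≥ 1 be natural numbers, let M ≥ 1 be a real number, and let a_1, …, a_l be nonnegative real numbers. Then 1 + M · ∑_{(j_1,…,j_l)} ∏_{i=1}^{l} a_i^{j_i} ≤ ∏_{i=1}^{l} ( 1 + M · ∑_{j=1}^{Q} a_i^{j} ), where the sum on the left ranges over all tuples (j_1, …, j_l) of natural numbers with 1 ≤ j_1 + ⋯ + j_l ≤ Q. -/
/-- For `l, Q ≥ 1`, `M ≥ 1` and nonnegative reals `a 1, …, a l`,
`1 + M * ∑_{1 ≤ j₁ + ⋯ + j_l ≤ Q} ∏ i, (a i)^(j i) ≤ ∏ i, (1 + M * ∑_{j=1}^{Q} (a i)^j)`,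
where the left-hand sum ranges over all tuples `(j₁, …, j_l)` of natural numbers whose sum
lies between `1` and `Q`. -/
theorem stmt_8 (l Q : ℕ) (hl : 1 ≤ l) (hQ : 1 ≤ Q) (M : ℝ) (hM : 1 ≤ M)
    (a : Fin l → ℝ) (ha : ∀ i, 0 ≤ a i) :
    1 + M * ∑ j ∈ (Fintype.piFinset fun _ : Fin l => Finset.range (Q + 1)).filter
        (fun j : Fin l → ℕ => 1 ≤ ∑ i, j i ∧ ∑ i, j i ≤ Q),
        ∏ i, a i ^ j i
      ≤ ∏ i, (1 + M * ∑ j ∈ Finset.Icc 1 Q, a i ^ j) := by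
  classical
  set s := Fintype.piFinset fun _ : Fin l => Finset.range (Q + 1) with hs
  set g : Fin l → ℕ → ℝ := fun i j => if j = 0 then 1 else M * a i ^ j with hg
  have hM0 : 0 ≤ M := le_trans zero_le_one hM
  have hg_nonneg : ∀ i j, 0 ≤ g i j := by
    intro i j
    simp only [hg]
    split
    · exact zero_le_one
    · exact mul_nonneg hM0 (pow_nonneg (ha i) j)
  have hrhs : ∏ i, (1 + M * ∑ j ∈ Finset.Icc 1 Q, a i ^ j) = ∑ f ∈ s, ∏ i, g i (f i) := by
    rw [← Finset.prod_univ_sum]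
    apply Finset.prod_congr rfl
    intro i _
    have hr : Finset.range (Q + 1) = insert 0 (Finset.Icc 1 Q) := by
      ext j; simp [Nat.lt_succ_iff]; omega
    rw [hr, Finset.sum_insert (by simp)]
    have : ∑ j ∈ Finset.Icc 1 Q, g i j = ∑ j ∈ Finset.Icc 1 Q, M * a i ^ j := by
      apply Finset.sum_congr rfl
      intro j hj
      have : j ≠ 0 := by simp at hj; omega
      simp [hg, this]
    rw [this, ← Finset.mul_sum]
    simp [hg]
  have hlhs : (1 : ℝ) + M * ∑ j ∈ s.filter
        (fun j : Fin l → ℕ => 1 ≤ ∑ i, j i ∧ ∑ i, j i ≤ Q), ∏ i, a i ^ j i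
      = ∑ f ∈ s, ((if f = 0 then (1:ℝ) else 0)
          + (if 1 ≤ ∑ i, f i ∧ ∑ i, f i ≤ Q then M * ∏ i, a i ^ f i else 0)) := by
    rw [Finset.sum_add_distrib]
    congr 1
    · rw [Finset.sum_ite_eq' s (0 : Fin l → ℕ) (fun _ => (1:ℝ))]
      have h0 : (0 : Fin l → ℕ) ∈ s := by
        simp [hs, Fintype.mem_piFinset]
      simp [h0]
    · rw [← Finset.sum_filter, ← Finset.mul_sum]
  rw [hrhs, hlhs]
  apply Finset.sum_le_sum
  intro f hf
  by_cases hf0 : f = 0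
  · subst hf0
    have : ¬ (1 ≤ ∑ i : Fin l, (0 : ℕ) ∧ ∑ i : Fin l, (0 : ℕ) ≤ Q) := by simp
    simp [this, hg]
  · have hne : ∃ i, f i ≠ 0 := by
      by_contra h
      push_neg at h
      exact hf0 (funext h)
    obtain ⟨i0, hi0⟩ := hne
    simp only [hf0, if_false, zero_add]
    split
    · -- need M * ∏ a ^ f ≤ ∏ g i (f i)
      rw [← Finset.mul_prod_erase Finset.univ _ (Finset.mem_univ i0),
          ← Finset.mul_prod_erase Finset.univ _ (Finset.mem_univ i0), ← mul_assoc]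
      have hgi0 : g i0 (f i0) = M * a i0 ^ f i0 := by simp [hg, hi0]
      rw [hgi0]
      apply mul_le_mul_of_nonneg_left
      · apply Finset.prod_le_prod
        · intro i _; exact pow_nonneg (ha i) _
        · intro i _
          simp only [hg]
          split
          · next h => simp [h]
          · nlinarith [pow_nonneg (ha i) (f i)]
      · exact mul_nonneg hM0 (pow_nonneg (ha i0) _)
    · exact Finset.prod_nonneg fun i _ => hg_nonneg i (f i)
end
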